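/- arXiv:1308.0782 — 2 statements merged into one kernel-verified Lean document; each statement's English description precedes it below -/
import Mathlib

section
/- For any subset V of S_n, the generalized quotient S_n/V = { w : ℓ(wv) = ℓ(w)+ℓ(v) for all v ∈ V } is closed downward under the left weak order: if u ≤ w in left weak order and w ∈ S_n/V, then u ∈ S_n/V. -/
/-!
The length `ℓ` is subadditive, since a pair inverted by `x * y` but not by `y` is sent by `y` to a
pair inverted by `x`. Factoring `w * v = (w * u⁻¹) * (u * v)` then gives
`ℓ(w) + ℓ(v) = ℓ(w v) ≤ ℓ(w u⁻¹) + ℓ(u v) ≤ ℓ(w u⁻¹) + ℓ(u) + ℓ(v) = ℓ(w) + ℓ(v)`,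
so the second inequality `ℓ(u v) ≤ ℓ(u) + ℓ(v)` is an equality.
-/

/-- The Coxeter length of a permutation of `{1,...,n}`: its number of inversions. -/
def invCount {n : ℕ} (w : Equiv.Perm (Fin n)) : ℕ :=
  (Finset.univ.filter (fun p : Fin n × Fin n => p.1 < p.2 ∧ w p.2 < w p.1)).card

/-- Left weak order: `u ≤ w` iff `ℓ(w) = ℓ(w u⁻¹) + ℓ(u)`. -/
def weakLe {n : ℕ} (u w : Equiv.Perm (Fin n)) : Prop :=
  invCount w = invCount (w * u⁻¹) + invCount u

namespace Equiv.Perm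

variable {n : ℕ}

def inversions (w : Perm (Fin n)) : Finset (Fin n × Fin n) :=
  Finset.univ.filter (fun p => p.1 < p.2 ∧ w p.2 < w p.1)

theorem mem_inversions {w : Perm (Fin n)} {p : Fin n × Fin n} :
    p ∈ w.inversions ↔ p.1 < p.2 ∧ w p.2 < w p.1 := by
  simp [inversions]

theorem card_inversions (w : Perm (Fin n)) : w.inversions.card = invCount w := rfl

theorem inversions_mul_subset (x y : Perm (Fin n)) :
    (x * y).inversions ⊆
      x.inversions.map (prodCongr y.symm y.symm).toEmbedding ∪ y.inversions := by
  intro p hp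
  rw [mem_inversions, coe_mul, Function.comp_apply, Function.comp_apply] at hp
  rw [Finset.mem_union, Finset.mem_map_equiv, mem_inversions, mem_inversions]
  by_cases hy : y p.2 < y p.1
  · exact Or.inr ⟨hp.1, hy⟩
  · exact Or.inl ⟨lt_of_le_of_ne (not_lt.mp hy) (y.injective.ne hp.1.ne), hp.2⟩

theorem invCount_mul_le (x y : Perm (Fin n)) :
    invCount (x * y) ≤ invCount x + invCount y := by
  simp only [← card_inversions]
  calc (x * y).inversions.card
      ≤ (x.inversions.map (prodCongr y.symm y.symm).toEmbedding ∪ y.inversions).card :=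
        Finset.card_le_card (inversions_mul_subset x y)
    _ ≤ _ := Finset.card_union_le _ _
    _ = x.inversions.card + y.inversions.card := by rw [Finset.card_map]

end Equiv.Perm

/-- Generalized quotients are downward closed under the left weak order. -/
theorem generalized_quotient_downward_closed {n : ℕ} (V : Set (Equiv.Perm (Fin n)))
    (u w : Equiv.Perm (Fin n)) (hle : weakLe u w)
    (hw : ∀ v ∈ V, invCount (w * v) = invCount w + invCount v) :
    ∀ v ∈ V, invCount (u * v) = invCount u + invCount v := by
  intro v hv
  have hfactored : invCount (w * v) ≤ invCount (w * u⁻¹) + invCount (u * v) := by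
    simpa only [mul_assoc, inv_mul_cancel_left] using Equiv.Perm.invCount_mul_le (w * u⁻¹) (u * v)
  have hsubadd : invCount (u * v) ≤ invCount u + invCount v := Equiv.Perm.invCount_mul_le u v
  have hwv := hw v hv
  unfold weakLe at hle
  omega
end

section
/- If λ_Y is a strict partition associated to a proper Young wall Y, then the set ST_∞(Y) of standard tableaux T with T(i,j) < T(i,j+1) and T(i,j) < T(i+1, j−1) for all valid positions is in bijection with the set of standard tableaux of the shifted Young diagram of λ_Y, via shifting the k-th column of T up by k. -/
/-- The cells of the proper Young wall `Y` whose columns have heights `lam i`: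
cell `(i, j)` is in column `i`, row `j` with `1 ≤ j ≤ lam i`. -/
def cellsY (lam : ℕ → ℕ) : Set (ℕ × ℕ) := {p | 1 ≤ p.2 ∧ p.2 ≤ lam p.1}

/-- The cells of the shifted Young diagram of the strict partition `lam`:
the `i`-th column is moved up by `i`. -/
def cellsS (lam : ℕ → ℕ) : Set (ℕ × ℕ) := {p | p.1 + 1 ≤ p.2 ∧ p.2 ≤ p.1 + lam p.1}

/-- The shift equivalence between the cells of the Young wall and the shifted diagram. -/
def shiftEquiv (lam : ℕ → ℕ) : ↥(cellsY lam) ≃ ↥(cellsS lam) where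
  toFun p := ⟨((p : ℕ × ℕ).1, (p : ℕ × ℕ).2 + (p : ℕ × ℕ).1), by
    have h := p.2
    simp only [cellsY, Set.mem_setOf_eq] at h
    simp only [cellsS, Set.mem_setOf_eq]
    omega⟩
  invFun p := ⟨((p : ℕ × ℕ).1, (p : ℕ × ℕ).2 - (p : ℕ × ℕ).1), by
    have h := p.2
    simp only [cellsS, Set.mem_setOf_eq] at h
    simp only [cellsY, Set.mem_setOf_eq]
    omega⟩
  left_inv p := by
    apply Subtype.ext
    apply Prod.ext <;> simp
  right_inv p := by
    have h := p.2
    simp only [cellsS, Set.mem_setOf_eq] at h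
    apply Subtype.ext
    apply Prod.ext <;> simp <;> omega

/-- If `λ_Y` is a strict partition, then `ST_∞(Y)` (standard tableaux with
`T(i,j) < T(i,j+1)` and `T(i,j) < T(i+1,j−1)`) is in bijection with the set of
standard tableaux of the shifted Young diagram of `λ_Y`, via shifting the `k`-th
column up by `k`. -/
theorem STinf_bij_shifted_standard (lam : ℕ → ℕ) (hanti : Antitone lam)
    (hstrict : ∀ i, lam i ≠ 0 → lam (i + 1) < lam i) (n : ℕ) :
    ∃ e : ↥(cellsY lam) ≃ ↥(cellsS lam),
      (∀ p : ↥(cellsY lam), (e p : ℕ × ℕ) = ((p : ℕ × ℕ).1, (p : ℕ × ℕ).2 + (p : ℕ × ℕ).1)) ∧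
      Set.BijOn (fun T : ↥(cellsY lam) ≃ Fin n => e.symm.trans T)
        {T : ↥(cellsY lam) ≃ Fin n | ∀ a b : ↥(cellsY lam),
          (((a : ℕ × ℕ).1 = (b : ℕ × ℕ).1 ∧ (a : ℕ × ℕ).2 + 1 = (b : ℕ × ℕ).2) ∨
           ((a : ℕ × ℕ).1 + 1 = (b : ℕ × ℕ).1 ∧ (a : ℕ × ℕ).2 = (b : ℕ × ℕ).2 + 1)) →
          T a < T b}
        {T : ↥(cellsS lam) ≃ Fin n | ∀ a b : ↥(cellsS lam),
          (((a : ℕ × ℕ).1 = (b : ℕ × ℕ).1 ∧ (a : ℕ × ℕ).2 + 1 = (b : ℕ × ℕ).2) ∨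
           ((a : ℕ × ℕ).1 + 1 = (b : ℕ × ℕ).1 ∧ (a : ℕ × ℕ).2 = (b : ℕ × ℕ).2)) →
          T a < T b} := by
  refine ⟨shiftEquiv lam, fun p => rfl, ?_, ?_, ?_⟩
  · -- MapsTo
    intro T hT a b hab
    have ha := a.2
    have hb := b.2
    simp only [cellsS, Set.mem_setOf_eq] at ha hb
    apply hT
    simp only [shiftEquiv, Equiv.coe_fn_symm_mk]
    rcases hab with ⟨h1, h2⟩ | ⟨h1, h2⟩
    · left; exact ⟨h1, by omega⟩
    · right; exact ⟨h1, by omega⟩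
  · -- InjOn
    intro T _ T' _ h
    simp only at h
    apply Equiv.ext; intro a
    have := DFunLike.congr_fun h ((shiftEquiv lam) a)
    simpa using this
  · -- SurjOn
    intro T' hT'
    refine ⟨(shiftEquiv lam).trans T', ?_, ?_⟩
    · intro a b hab
      have ha := a.2
      have hb := b.2
      simp only [cellsY, Set.mem_setOf_eq] at ha hb
      apply hT'
      simp only [shiftEquiv, Equiv.trans_apply, Equiv.coe_fn_mk]
      rcases hab with ⟨h1, h2⟩ | ⟨h1, h2⟩
      · left; exact ⟨h1, by omega⟩
      · right; exact ⟨h1, by omega⟩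
    · apply Equiv.ext
      intro a
      simp
end
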